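/- Let s ≥ 1 and define a single-edit step on lists of Booleans: y is obtained from x by a single-edit step if y = x.insertIdx i b for some index i and Boolean b, or y = x.eraseIdx i for some index i. If y is obtained from x by a sequence of d single-edit steps, then the number of positions at which the pattern 1·0^s occurs in y and the number of positions at which it occurs in x differ by at most d. -/

import Mathlib

/-- The pattern `P` occurs in the binary string `z` at position `p`. -/
def occursAt (P z : List Bool) (p : ℕ) : Prop :=
  (z.drop p).take P.length = P

/-- The header pattern `1·0^s`: the symbol 1 followed by `s` copies of 0. -/
def header (s : ℕ) : List Bool :=
  true :: List.replicate s false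

/-- The number of positions at which the pattern `1·0^s` occurs in `z`. -/
noncomputable def occCount (s : ℕ) (z : List Bool) : ℕ :=
  Set.ncard {p : ℕ | occursAt (header s) z p}

/-- A single-edit step on binary strings: insertion of one symbol at some
position, or deletion of the symbol at some position. -/
def EditStep (x y : List Bool) : Prop :=
  (∃ (i : ℕ) (b : Bool), y = x.insertIdx i b) ∨ (∃ i : ℕ, y = x.eraseIdx i)

lemma header_getElem? (s n : ℕ) :
    (header s)[n]? = if n = 0 then some true else if n ≤ s then some false else none := by
  rcases n with _ | m
  · simp [header]
  · simp only [header, List.getElem?_cons, List.getElem?_replicate]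
    split_ifs <;> simp_all <;> omega

lemma occursAt_iff (s : ℕ) (z : List Bool) (p : ℕ) :
    occursAt (header s) z p ↔
      z[p]? = some true ∧ ∀ j, 1 ≤ j → j ≤ s → z[p + j]? = some false := by
  have hlen : (header s).length = s + 1 := by simp [header]
  unfold occursAt
  rw [hlen]
  constructor
  · intro h
    have hget : ∀ n : ℕ, ((z.drop p).take (s+1))[n]? = (header s)[n]? :=
      fun n => congrArg (fun l : List Bool => l[n]?) h
    constructor
    · have h0 := hget 0
      rw [List.getElem?_take, if_pos (by omega), List.getElem?_drop, Nat.add_zero,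
        header_getElem?, if_pos rfl] at h0
      exact h0
    · intro j h1 h2
      have hj := hget j
      rw [List.getElem?_take, if_pos (by omega), List.getElem?_drop,
        header_getElem?, if_neg (by omega), if_pos h2] at hj
      exact hj
  · rintro ⟨h0, hj⟩
    apply List.ext_getElem?
    intro n
    rw [List.getElem?_take, header_getElem?]
    by_cases hn : n < s + 1
    · rw [if_pos hn, List.getElem?_drop]
      rcases Nat.eq_zero_or_pos n with rfl | hpos
      · rw [Nat.add_zero, if_pos rfl]; exact h0
      · rw [if_neg (by omega), if_pos (by omega)]
        exact hj n hpos (by omega)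
    · rw [if_neg hn, if_neg (by omega), if_neg (by omega)]

/-- Two occurrences of the header pattern cannot overlap. -/
lemma occ_disjoint {s : ℕ} {z : List Bool} {p q : ℕ} (hp : occursAt (header s) z p)
    (hq : occursAt (header s) z q) (h1 : p < q) (h2 : q ≤ p + s) : False := by
  rw [occursAt_iff] at hp hq
  have h3 := hp.2 (q - p) (by omega) (by omega)
  rw [show p + (q - p) = q from by omega, hq.1] at h3
  simp at h3

lemma occ_subset (s : ℕ) (z : List Bool) :
    {p | occursAt (header s) z p} ⊆ Set.Iio z.length := by
  intro p hp
  rw [Set.mem_setOf_eq, occursAt_iff] at hp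
  obtain ⟨h, -⟩ := List.getElem?_eq_some_iff.mp hp.1
  exact h

lemma occ_finite (s : ℕ) (z : List Bool) :
    {p | occursAt (header s) z p}.Finite :=
  (Set.finite_Iio _).subset (occ_subset s z)

lemma getElem?_insertIdx (l : List Bool) (b : Bool) (i k : ℕ) (hi : i ≤ l.length) :
    (l.insertIdx i b)[k]? = if k < i then l[k]? else if k = i then some b else l[k-1]? := by
  have hlen : (l.insertIdx i b).length = l.length + 1 := List.length_insertIdx_of_le_length hi b
  split_ifs with h1 h2
  · by_cases hk : k < l.length
    · rw [List.getElem?_eq_getElem (by omega), List.getElem?_eq_getElem hk]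
      exact congrArg some (List.getElem_insertIdx_of_lt h1 (by omega))
    · rw [List.getElem?_eq_none (by omega), List.getElem?_eq_none (by omega)]
  · subst h2
    rw [List.getElem?_eq_getElem (by omega)]
    exact congrArg some (List.getElem_insertIdx_self (by omega))
  · obtain ⟨j, rfl⟩ : ∃ j, k = i + j + 1 := ⟨k - i - 1, by omega⟩
    rw [show i + j + 1 - 1 = i + j from by omega]
    by_cases hk : i + j < l.length
    · rw [List.getElem?_eq_getElem (by omega), List.getElem?_eq_getElem hk]
      exact congrArg some (List.getElem_insertIdx_add_succ l b i j hk)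
    · rw [List.getElem?_eq_none (by omega), List.getElem?_eq_none (by omega)]

/-- The effect of a single insertion on occurrence counts. -/
lemma occCount_insertIdx (s : ℕ) (x : List Bool) (i : ℕ) (b : Bool) :
    occCount s x ≤ occCount s (x.insertIdx i b) + 1 ∧
    occCount s (x.insertIdx i b) ≤ occCount s x + 1 := by
  by_cases hi : i ≤ x.length
  swap
  · rw [List.insertIdx_of_length_lt (by omega)]; omega
  set y := x.insertIdx i b with hy
  have hlow : ∀ p, p + s + 1 ≤ i → (occursAt (header s) x p ↔ occursAt (header s) y p) := by
    intro p hp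
    rw [occursAt_iff, occursAt_iff]
    have he : ∀ j, j ≤ s → y[p + j]? = x[p + j]? := fun j hj => by
      rw [hy, getElem?_insertIdx x b i _ hi, if_pos (by omega)]
    have h0 := he 0 (Nat.zero_le _)
    rw [Nat.add_zero] at h0
    constructor
    · rintro ⟨h1, h2⟩
      exact ⟨h0 ▸ h1, fun j hj1 hj2 => (he j hj2) ▸ h2 j hj1 hj2⟩
    · rintro ⟨h1, h2⟩
      refine ⟨h0 ▸ h1, fun j hj1 hj2 => (he j hj2) ▸ h2 j hj1 hj2⟩
  have hhigh : ∀ p, i ≤ p → (occursAt (header s) x p ↔ occursAt (header s) y (p + 1)) := by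
    intro p hp
    rw [occursAt_iff, occursAt_iff]
    have he : ∀ j, j ≤ s → y[p + 1 + j]? = x[p + j]? := fun j hj => by
      rw [hy, getElem?_insertIdx x b i _ hi, if_neg (by omega), if_neg (by omega)]
      congr 1
      omega
    have h0 := he 0 (Nat.zero_le _)
    rw [Nat.add_zero] at h0
    have hadd : ∀ j : ℕ, p + 1 + j = p + j + 1 := fun j => by omega
    constructor
    · rintro ⟨h1, h2⟩
      refine ⟨h0 ▸ h1, fun j hj1 hj2 => ?_⟩
      rw [he j hj2]; exact h2 j hj1 hj2
    · rintro ⟨h1, h2⟩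
      refine ⟨h0 ▸ h1, fun j hj1 hj2 => ?_⟩
      rw [← he j hj2]; exact h2 j hj1 hj2
  set Sx := {p | occursAt (header s) x p} with hSx
  set Sy := {p | occursAt (header s) y p} with hSy
  have hfx := occ_finite s x
  have hfy := occ_finite s y
  have hgx : occCount s x = Sx.ncard := rfl
  have hgy : occCount s y = Sy.ncard := rfl
  constructor
  · -- occCount x ≤ occCount y + 1
    set B : Set ℕ := {p | p < i ∧ i < p + s + 1} with hB
    have key : (Sx \ B).ncard ≤ Sy.ncard := by
      have hmaps : ∀ p ∈ Sx \ B, (if p + s + 1 ≤ i then p else p + 1) ∈ Sy := by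
        rintro p ⟨hp, hpb⟩
        simp only [hSx, Set.mem_setOf_eq] at hp
        simp only [hB, Set.mem_setOf_eq, not_and, not_lt] at hpb
        by_cases hc : p + s + 1 ≤ i
        · simpa [hc, hSy] using (hlow p hc).mp hp
        · have hip : i ≤ p := by by_contra h; exact absurd (hpb (by omega)) (by omega)
          simpa [hc, hSy] using (hhigh p hip).mp hp
      have hinj : Set.InjOn (fun p => if p + s + 1 ≤ i then p else p + 1) (Sx \ B) := by
        rintro p ⟨-, hpb⟩ q ⟨-, hqb⟩ hpq
        simp only at hpq
        split_ifs at hpq <;> omega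
      exact Set.ncard_le_ncard_of_injOn _ hmaps hinj hfy
    have hone : (Sx ∩ B).ncard ≤ 1 := by
      refine (Set.ncard_le_one (hfx.subset Set.inter_subset_left)).mpr ?_
      rintro p ⟨hp, hp1, hp2⟩ q ⟨hq, hq1, hq2⟩
      by_contra hne
      rcases Nat.lt_or_ge p q with h | h
      · exact occ_disjoint hp hq h (by omega)
      · exact occ_disjoint hq hp (by omega) (by omega)
    have := Set.ncard_inter_add_ncard_diff_eq_ncard Sx B hfx
    omega
  · -- occCount y ≤ occCount x + 1
    set B : Set ℕ := {p | p ≤ i ∧ i < p + s + 1} with hB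
    have key : (Sy \ B).ncard ≤ Sx.ncard := by
      have hmaps : ∀ p ∈ Sy \ B, (if p + s + 1 ≤ i then p else p - 1) ∈ Sx := by
        rintro p ⟨hp, hpb⟩
        simp only [hSy, Set.mem_setOf_eq] at hp
        simp only [hB, Set.mem_setOf_eq, not_and, not_lt] at hpb
        by_cases hc : p + s + 1 ≤ i
        · simpa [hc, hSx] using (hlow p hc).mpr hp
        · have hip : i < p := by by_contra h; exact absurd (hpb (by omega)) (by omega)
          have heq : p - 1 + 1 = p := by omega
          have hocc := (hhigh (p - 1) (by omega)).mpr (by rwa [heq])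
          simpa [hc, hSx] using hocc
      have hinj : Set.InjOn (fun p => if p + s + 1 ≤ i then p else p - 1) (Sy \ B) := by
        rintro p ⟨-, hpb⟩ q ⟨-, hqb⟩ hpq
        simp only [hB, Set.mem_setOf_eq, not_and, not_lt] at hpb hqb
        have hp' : p + s + 1 ≤ i ∨ i < p := by
          by_cases hc : p + s + 1 ≤ i
          · exact Or.inl hc
          · exact Or.inr (by by_contra h; exact absurd (hpb (by omega)) (by omega))
        have hq' : q + s + 1 ≤ i ∨ i < q := by
          by_cases hc : q + s + 1 ≤ i
          · exact Or.inl hc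
          · exact Or.inr (by by_contra h; exact absurd (hqb (by omega)) (by omega))
        simp only at hpq
        split_ifs at hpq <;> omega
      exact Set.ncard_le_ncard_of_injOn _ hmaps hinj hfx
    have hone : (Sy ∩ B).ncard ≤ 1 := by
      refine (Set.ncard_le_one (hfy.subset Set.inter_subset_left)).mpr ?_
      rintro p ⟨hp, hp1, hp2⟩ q ⟨hq, hq1, hq2⟩
      by_contra hne
      rcases Nat.lt_or_ge p q with h | h
      · exact occ_disjoint hp hq h (by omega)
      · exact occ_disjoint hq hp (by omega) (by omega)
    have := Set.ncard_inter_add_ncard_diff_eq_ncard Sy B hfy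
    omega

lemma insertIdx_eraseIdx_self (x : List Bool) (i : ℕ) (hi : i < x.length) :
    (x.eraseIdx i).insertIdx i x[i] = x := by
  have hlen : (x.eraseIdx i).length = x.length - 1 := by
    rw [List.length_eraseIdx]; simp [hi]
  apply List.ext_getElem?
  intro k
  rw [getElem?_insertIdx _ _ _ _ (by omega)]
  split_ifs with h1 h2
  · rw [List.getElem?_eraseIdx, if_pos h1]
  · subst h2
    rw [List.getElem?_eq_getElem hi]
  · rw [List.getElem?_eraseIdx, if_neg (by omega)]
    congr 1
    omega

lemma occCount_editStep {s : ℕ} {x y : List Bool} (h : EditStep x y) :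
    occCount s y ≤ occCount s x + 1 ∧ occCount s x ≤ occCount s y + 1 := by
  rcases h with ⟨i, b, rfl⟩ | ⟨i, rfl⟩
  · exact (occCount_insertIdx s x i b).symm
  · by_cases hi : i < x.length
    · have := occCount_insertIdx s (x.eraseIdx i) i x[i]
      rw [insertIdx_eraseIdx_self x i hi] at this
      exact this
    · rw [List.eraseIdx_of_length_le (by omega)]
      omega

/-- A sequence of `d` single-edit steps (insertions or deletions) changes the
number of occurrences of the header pattern `1·0^s` by at most `d`. -/
theorem stmt_6 (s : ℕ) (hs : 1 ≤ s) (d : ℕ) (x y : List Bool)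
    (f : ℕ → List Bool) (hf0 : f 0 = x) (hfd : f d = y)
    (hstep : ∀ k < d, EditStep (f k) (f (k + 1))) :
    occCount s y ≤ occCount s x + d ∧ occCount s x ≤ occCount s y + d := by
  induction d generalizing y with
  | zero =>
    subst hf0 hfd
    omega
  | succ n ih =>
    have h1 := ih (f n) rfl (fun k hk => hstep k (by omega))
    have h2 : EditStep (f n) (f (n + 1)) := hstep n (by omega)
    have h3 := occCount_editStep (s := s) h2
    rw [hfd] at h3
    omega
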